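/- arXiv:2405.04310 — 3 statements merged into one kernel-verified Lean document; each statement's English description precedes it below -/
import Mathlib

section
/- Let ψ ∈ C²([a,b]) be a positive function with ψ'(a) = ψ'(b) = 0. Then ∫_a^b [(√ψ)'']² dx ≤ (13/8) ∫_a^b ψ [(log ψ)'']² dx. -/
/-!
Write `p = ψ`, `g = ψ'`, `h = ψ''` and `u = p h - g²`. Then `((√ψ)'')² = (2u + g²)² / (16 p³)` and
`ψ ((log ψ)'')² = u² / p³`, while `(g³ / p²)' = (3 u g² + g⁴) / p³` integrates to zero by the Neumann
conditions. Eliminating the cross term `u g²` with it gives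
`∫ ((√ψ)'')² = (1/4) ∫ ψ ((log ψ)'')² - (1/48) ∫ ψ'⁴ / ψ³`,
so the inequality even holds with the constant `1/4`.
-/
open Real Set Filter Topology intervalIntegral

section SecondDerivatives

variable {f : ℝ → ℝ} {x : ℝ}

lemma deriv_deriv_sqrt_comp (hf : ContDiff ℝ 2 f) (hx : 0 < f x) :
    deriv (deriv fun y => √(f y)) x =
      (2 * f x * deriv (deriv f) x - deriv f x ^ 2) / (4 * f x * √(f x)) := by
  have hf₁ : Differentiable ℝ f := hf.differentiable two_ne_zero
  have hderiv : deriv (fun y => √(f y)) =ᶠ[𝓝 x] fun y => deriv f y / (2 * √(f y)) := by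
    filter_upwards [hf.continuous.continuousAt.eventually (lt_mem_nhds hx)] with y hy
    exact ((hf₁ y).hasDerivAt.sqrt hy.ne').deriv
  have hsqrt := ((hf₁ x).hasDerivAt.sqrt hx.ne').const_mul 2
  rw [hderiv.deriv_eq, ((hf.differentiable_deriv_two x).hasDerivAt.fun_div hsqrt
    (by positivity)).deriv]
  have hsq : √(f x) ^ 2 = f x := sq_sqrt hx.le
  field_simp
  linear_combination 4 * deriv f x ^ 2 * hsq

lemma deriv_deriv_log_comp (hf : ContDiff ℝ 2 f) (hx : 0 < f x) :
    deriv (deriv fun y => log (f y)) x =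
      (f x * deriv (deriv f) x - deriv f x ^ 2) / f x ^ 2 := by
  have hf₁ : Differentiable ℝ f := hf.differentiable two_ne_zero
  have hderiv : deriv (fun y => log (f y)) =ᶠ[𝓝 x] fun y => deriv f y / f y := by
    filter_upwards [hf.continuous.continuousAt.eventually (lt_mem_nhds hx)] with y hy
    exact ((hf₁ y).hasDerivAt.log hy.ne').deriv
  rw [hderiv.deriv_eq, ((hf.differentiable_deriv_two x).hasDerivAt.fun_div (hf₁ x).hasDerivAt
    hx.ne').deriv]
  ring

end SecondDerivatives

lemma sq_sqrt_second_deriv_eq {p g h : ℝ} (hp : 0 < p) :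
    ((2 * p * h - g ^ 2) / (4 * p * √p)) ^ 2 =
      (p * h - g ^ 2) ^ 2 / p ^ 3 / 4 + (3 * p * g ^ 2 * h - 2 * g ^ 4) / p ^ 3 / 12
        - g ^ 4 / p ^ 3 / 48 := by
  rw [div_pow, mul_pow, mul_pow, sq_sqrt hp.le]
  field_simp
  ring

section Integrals

variable {f : ℝ → ℝ} {a b : ℝ}

lemma intervalIntegrable_div_pow {φ : ℝ → ℝ} (hφ : Continuous φ) (hf : Continuous f)
    (hf₀ : ∀ x ∈ uIcc a b, f x ≠ 0) (n : ℕ) :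
    IntervalIntegrable (fun x => φ x / f x ^ n) MeasureTheory.volume a b :=
  (hφ.continuousOn.div (hf.pow n).continuousOn fun x hx => pow_ne_zero n (hf₀ x hx))
    |>.intervalIntegrable

lemma integral_deriv_cube_div_sq (hf : ContDiff ℝ 2 f) (hf₀ : ∀ x ∈ uIcc a b, f x ≠ 0) :
    ∫ x in a..b, (3 * f x * deriv f x ^ 2 * deriv (deriv f) x - 2 * deriv f x ^ 4) / f x ^ 3 =
      deriv f b ^ 3 / f b ^ 2 - deriv f a ^ 3 / f a ^ 2 := by
  have hf₁ : Differentiable ℝ f := hf.differentiable two_ne_zero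
  have hf₂ : Differentiable ℝ (deriv f) := hf.differentiable_deriv_two
  have hg : Continuous (deriv f) := hf.continuous_deriv one_le_two
  refine integral_eq_sub_of_hasDerivAt (f := fun x => deriv f x ^ 3 / f x ^ 2) (fun x hx => ?_)
    (intervalIntegrable_div_pow (φ := fun x => 3 * f x * deriv f x ^ 2 * deriv (deriv f) x -
      2 * deriv f x ^ 4) (by fun_prop) hf.continuous hf₀ 3)
  have hx₀ := hf₀ x hx
  refine (((hf₂ x).hasDerivAt.fun_pow 3).fun_div ((hf₁ x).hasDerivAt.fun_pow 2)
    (pow_ne_zero 2 hx₀)).congr_deriv ?_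
  push_cast
  field_simp

end Integrals

theorem integral_sq_deriv_deriv_sqrt_comp {f : ℝ → ℝ} {a b : ℝ} (hf : ContDiff ℝ 2 f)
    (hpos : ∀ x ∈ uIcc a b, 0 < f x) (ha : deriv f a = 0) (hb : deriv f b = 0) :
    ∫ x in a..b, (deriv (deriv fun y => √(f y)) x) ^ 2 =
      (∫ x in a..b, f x * (deriv (deriv fun y => log (f y)) x) ^ 2) / 4 -
        (∫ x in a..b, deriv f x ^ 4 / f x ^ 3) / 48 := by
  have hf₀ : ∀ x ∈ uIcc a b, f x ≠ 0 := fun x hx => (hpos x hx).ne'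
  have hg : Continuous (deriv f) := hf.continuous_deriv one_le_two
  have hlog : ∫ x in a..b, f x * (deriv (deriv fun y => log (f y)) x) ^ 2 =
      ∫ x in a..b, (f x * deriv (deriv f) x - deriv f x ^ 2) ^ 2 / f x ^ 3 :=
    integral_congr fun x hx => by
      have := hf₀ x hx
      rw [deriv_deriv_log_comp hf (hpos x hx)]
      field_simp
  have hsqrt : ∫ x in a..b, (deriv (deriv fun y => √(f y)) x) ^ 2 =
      ∫ x in a..b, ((f x * deriv (deriv f) x - deriv f x ^ 2) ^ 2 / f x ^ 3 / 4 +
        (3 * f x * deriv f x ^ 2 * deriv (deriv f) x - 2 * deriv f x ^ 4) / f x ^ 3 / 12 -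
        deriv f x ^ 4 / f x ^ 3 / 48) :=
    integral_congr fun x hx => by
      rw [deriv_deriv_sqrt_comp hf (hpos x hx), sq_sqrt_second_deriv_eq (hpos x hx)]
  have hint {φ : ℝ → ℝ} (hφ : Continuous φ) (c : ℝ) :
      IntervalIntegrable (fun x => φ x / f x ^ 3 / c) MeasureTheory.volume a b :=
    (intervalIntegrable_div_pow hφ hf.continuous hf₀ 3).div_const c
  have hsq := hint (φ := fun x => (f x * deriv (deriv f) x - deriv f x ^ 2) ^ 2) (by fun_prop) 4
  have htotal := hint (φ := fun x => 3 * f x * deriv f x ^ 2 * deriv (deriv f) x -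
    2 * deriv f x ^ 4) (by fun_prop) 12
  rw [hsqrt, hlog, integral_sub, integral_add, integral_div, integral_div, integral_div,
    integral_deriv_cube_div_sq hf hf₀, ha, hb]
  exacts [by ring, hsq, htotal, hsq.add htotal, hint (by fun_prop) 48]

theorem stmt_4 (a b : ℝ) (hab : a < b) (ψ : ℝ → ℝ)
    (hψ : ContDiff ℝ 2 ψ)
    (hpos : ∀ x ∈ Set.Icc a b, 0 < ψ x)
    (hba : deriv ψ a = 0) (hbb : deriv ψ b = 0) :
    (∫ x in a..b, (deriv (deriv (fun y => Real.sqrt (ψ y))) x) ^ 2) ≤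
      (13 / 8) * ∫ x in a..b, ψ x * (deriv (deriv (fun y => Real.log (ψ y))) x) ^ 2 := by
  rw [integral_sq_deriv_deriv_sqrt_comp hψ (by rwa [uIcc_of_le hab.le]) hba hbb]
  have hlog : 0 ≤ ∫ x in a..b, ψ x * (deriv (deriv fun y => log (ψ y)) x) ^ 2 :=
    integral_nonneg hab.le fun x hx => mul_nonneg (hpos x hx).le (sq_nonneg _)
  have hquartic : 0 ≤ ∫ x in a..b, deriv ψ x ^ 4 / ψ x ^ 3 :=
    integral_nonneg hab.le fun x hx => by have := hpos x hx; positivity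
  linarith
end

section
/- Let (u, θ) be a classical solution of u_tt - u_xx = μ θ_x and θ_t - θ_xx = μ θ u_tx on (0,T)×(a,b) with boundary conditions u(·,a) = u(·,b) = 0 and θ_x(·,a) = θ_x(·,b) = 0. Then the total energy is conserved: for all t ∈ [0,T], (1/2)∫_a^b u_t(t)² dx + (1/2)∫_a^b u_x(t)² dx + ∫_a^b θ(t) dx = (1/2)∫_a^b u_t(0)² dx + (1/2)∫_a^b u_x(0)² dx + ∫_a^b θ(0) dx. -/
open Function MeasureTheory Set

/-- Partial derivative in time (first variable). -/
noncomputable def pt (f : ℝ → ℝ → ℝ) : ℝ → ℝ → ℝ := fun t x => deriv (fun s => f s x) t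

/-- Partial derivative in space (second variable). -/
noncomputable def px (f : ℝ → ℝ → ℝ) : ℝ → ℝ → ℝ := fun t x => deriv (fun y => f t y) x

lemma hasDerivAt_t {f : ℝ → ℝ → ℝ} (hf : ContDiff ℝ (⊤ : ℕ∞) (uncurry f)) (t x : ℝ) :
    HasDerivAt (fun s => f s x) (pt f t x) t := by
  have h1 : HasDerivAt (fun s : ℝ => (s, x)) ((1:ℝ), (0:ℝ)) t :=
    HasDerivAt.prodMk (hasDerivAt_id t) (hasDerivAt_const t x)
  have h2 := ((hf.differentiable (by simp) (t, x)).hasFDerivAt).comp_hasDerivAt t h1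
  have h3 : pt f t x = fderiv ℝ (uncurry f) (t, x) (1, 0) := h2.deriv
  exact h3 ▸ h2

lemma hasDerivAt_x {f : ℝ → ℝ → ℝ} (hf : ContDiff ℝ (⊤ : ℕ∞) (uncurry f)) (t x : ℝ) :
    HasDerivAt (fun y => f t y) (px f t x) x := by
  have h1 : HasDerivAt (fun y : ℝ => (t, y)) ((0:ℝ), (1:ℝ)) x :=
    HasDerivAt.prodMk (hasDerivAt_const x t) (hasDerivAt_id x)
  have h2 := ((hf.differentiable (by simp) (t, x)).hasFDerivAt).comp_hasDerivAt x h1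
  have h3 : px f t x = fderiv ℝ (uncurry f) (t, x) (0, 1) := h2.deriv
  exact h3 ▸ h2

lemma pt_eq_fderiv {f : ℝ → ℝ → ℝ} (hf : ContDiff ℝ (⊤ : ℕ∞) (uncurry f)) (t x : ℝ) :
    pt f t x = fderiv ℝ (uncurry f) (t, x) (1, 0) := by
  have h1 : HasDerivAt (fun s : ℝ => (s, x)) ((1:ℝ), (0:ℝ)) t :=
    HasDerivAt.prodMk (hasDerivAt_id t) (hasDerivAt_const t x)
  exact (((hf.differentiable (by simp) (t, x)).hasFDerivAt).comp_hasDerivAt t h1).deriv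

lemma px_eq_fderiv {f : ℝ → ℝ → ℝ} (hf : ContDiff ℝ (⊤ : ℕ∞) (uncurry f)) (t x : ℝ) :
    px f t x = fderiv ℝ (uncurry f) (t, x) (0, 1) := by
  have h1 : HasDerivAt (fun y : ℝ => (t, y)) ((0:ℝ), (1:ℝ)) x :=
    HasDerivAt.prodMk (hasDerivAt_const x t) (hasDerivAt_id x)
  exact (((hf.differentiable (by simp) (t, x)).hasFDerivAt).comp_hasDerivAt x h1).deriv

lemma contDiff_pt {f : ℝ → ℝ → ℝ} (hf : ContDiff ℝ (⊤ : ℕ∞) (uncurry f)) :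
    ContDiff ℝ (⊤ : ℕ∞) (uncurry (pt f)) := by
  have h : uncurry (pt f) = fun p : ℝ × ℝ => fderiv ℝ (uncurry f) p (1, 0) := by
    funext p; exact pt_eq_fderiv hf p.1 p.2
  rw [h]
  exact (hf.fderiv_right (le_of_eq (by simp))).clm_apply contDiff_const

lemma contDiff_px {f : ℝ → ℝ → ℝ} (hf : ContDiff ℝ (⊤ : ℕ∞) (uncurry f)) :
    ContDiff ℝ (⊤ : ℕ∞) (uncurry (px f)) := by
  have h : uncurry (px f) = fun p : ℝ × ℝ => fderiv ℝ (uncurry f) p (0, 1) := by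
    funext p; exact px_eq_fderiv hf p.1 p.2
  rw [h]
  exact (hf.fderiv_right (le_of_eq (by simp))).clm_apply contDiff_const

lemma fderiv_apply_const {F : ℝ × ℝ → ℝ} (hF : ContDiff ℝ (⊤ : ℕ∞) F) (q : ℝ × ℝ) (v w : ℝ × ℝ) :
    fderiv ℝ (fun p => fderiv ℝ F p v) q w = fderiv ℝ (fderiv ℝ F) q w v := by
  rw [fderiv_clm_apply ((hF.fderiv_right (m := (⊤ : ℕ∞)) (le_of_eq (by simp))).differentiable (by simp) q)
    (differentiableAt_const v)]
  simp

lemma mixed_comm {f : ℝ → ℝ → ℝ} (hf : ContDiff ℝ (⊤ : ℕ∞) (uncurry f)) (t x : ℝ) :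
    pt (px f) t x = px (pt f) t x := by
  have h1 : pt (px f) t x = fderiv ℝ (uncurry (px f)) (t, x) (1, 0) :=
    pt_eq_fderiv (contDiff_px hf) t x
  have h2 : px (pt f) t x = fderiv ℝ (uncurry (pt f)) (t, x) (0, 1) :=
    px_eq_fderiv (contDiff_pt hf) t x
  have e1 : uncurry (px f) = fun p : ℝ × ℝ => fderiv ℝ (uncurry f) p (0, 1) := by
    funext p; exact px_eq_fderiv hf p.1 p.2
  have e2 : uncurry (pt f) = fun p : ℝ × ℝ => fderiv ℝ (uncurry f) p (1, 0) := by
    funext p; exact pt_eq_fderiv hf p.1 p.2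
  have hs : IsSymmSndFDerivAt ℝ (uncurry f) (t, x) := hf.contDiffAt.isSymmSndFDerivAt (by rw [minSmoothness_of_isRCLikeNormedField]; exact WithTop.coe_le_coe.mpr (le_top : (2 : ℕ∞) ≤ ⊤))
  rw [h1, h2, e1, e2, fderiv_apply_const hf, fderiv_apply_const hf]
  exact hs _ _

lemma cont_x {f : ℝ → ℝ → ℝ} (hf : ContDiff ℝ (⊤ : ℕ∞) (uncurry f)) (t : ℝ) :
    Continuous (fun x => f t x) :=
  hf.continuous.comp (continuous_const.prodMk continuous_id)

theorem stmt_5 (a b T μ : ℝ) (hab : a < b) (hT : 0 < T)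
    (u θ : ℝ → ℝ → ℝ)
    (hu : ContDiff ℝ (⊤ : ℕ∞) (Function.uncurry u)) (hθ : ContDiff ℝ (⊤ : ℕ∞) (Function.uncurry θ))
    (hpos : ∀ t ∈ Set.Icc 0 T, ∀ x ∈ Set.Icc a b, 0 < θ t x)
    (heq1 : ∀ t ∈ Set.Ioo 0 T, ∀ x ∈ Set.Ioo a b,
      pt (pt u) t x - px (px u) t x = μ * px θ t x)
    (heq2 : ∀ t ∈ Set.Ioo 0 T, ∀ x ∈ Set.Ioo a b,
      pt θ t x - px (px θ) t x = μ * θ t x * px (pt u) t x)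
    (hbc : ∀ t ∈ Set.Icc 0 T,
      u t a = 0 ∧ u t b = 0 ∧ px θ t a = 0 ∧ px θ t b = 0) :
    ∀ t ∈ Set.Icc 0 T,
      (1 / 2) * (∫ x in a..b, (pt u t x) ^ 2) + (1 / 2) * (∫ x in a..b, (px u t x) ^ 2) +
          (∫ x in a..b, θ t x) =
        (1 / 2) * (∫ x in a..b, (pt u 0 x) ^ 2) + (1 / 2) * (∫ x in a..b, (px u 0 x) ^ 2) +
          ∫ x in a..b, θ 0 x := by
  intro t ht
  set F : ℝ → ℝ → ℝ := fun s x =>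
    (1 / 2) * (pt u s x) ^ 2 + (1 / 2) * (px u s x) ^ 2 + θ s x with hFdef
  set Φ : ℝ → ℝ → ℝ := fun s x =>
    pt u s x * px u s x + px θ s x + μ * (θ s x * pt u s x) with hΦdef
  have hptu := contDiff_pt hu
  have hpxu := contDiff_px hu
  have hptptu := contDiff_pt hptu
  have hptpxu := contDiff_pt hpxu
  have hpxptu := contDiff_px hptu
  have hpxpxu := contDiff_px hpxu
  have hpxθ := contDiff_px hθ
  have hF : ContDiff ℝ (⊤ : ℕ∞) (uncurry F) := by
    have : uncurry F = fun p : ℝ × ℝ =>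
        (1 / 2) * (uncurry (pt u) p) ^ 2 + (1 / 2) * (uncurry (px u) p) ^ 2 + uncurry θ p := rfl
    rw [this]
    exact (((contDiff_const.mul (hptu.pow 2)).add (contDiff_const.mul (hpxu.pow 2))).add hθ)
  have hΦ : ContDiff ℝ (⊤ : ℕ∞) (uncurry Φ) := by
    have : uncurry Φ = fun p : ℝ × ℝ =>
        uncurry (pt u) p * uncurry (px u) p + uncurry (px θ) p +
          μ * (uncurry θ p * uncurry (pt u) p) := rfl
    rw [this]
    exact ((hptu.mul hpxu).add hpxθ).add (contDiff_const.mul (hθ.mul hptu))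
  -- (A) time derivative of F
  have hA : ∀ s x : ℝ, HasDerivAt (fun r => F r x)
      (pt u s x * pt (pt u) s x + px u s x * pt (px u) s x + pt θ s x) s := by
    intro s x
    have h1 := hasDerivAt_t hptu s x
    have h2 := hasDerivAt_t hpxu s x
    have h3 := hasDerivAt_t hθ s x
    have := (((h1.fun_pow 2).const_mul ((1:ℝ)/2)).add ((h2.fun_pow 2).const_mul ((1:ℝ)/2))).add h3
    exact this.congr_deriv (by push_cast; ring)
  have hAderiv : ∀ s x : ℝ, pt F s x =
      pt u s x * pt (pt u) s x + px u s x * pt (px u) s x + pt θ s x :=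
    fun s x => (hA s x).deriv
  -- (B) space derivative of Φ
  have hBd : ∀ s x : ℝ, HasDerivAt (fun y => Φ s y)
      (px (pt u) s x * px u s x + pt u s x * px (px u) s x + px (px θ) s x +
        μ * (px θ s x * pt u s x + θ s x * px (pt u) s x)) x := by
    intro s x
    have h1 := hasDerivAt_x hptu s x
    have h2 := hasDerivAt_x hpxu s x
    have h3 := hasDerivAt_x hpxθ s x
    have h4 := hasDerivAt_x hθ s x
    exact ((h1.mul h2).add h3).add ((h4.mul h1).const_mul μ)
  have hBderiv : ∀ s x : ℝ, px Φ s x =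
      px (pt u) s x * px u s x + pt u s x * px (px u) s x + px (px θ) s x +
        μ * (px θ s x * pt u s x + θ s x * px (pt u) s x) :=
    fun s x => (hBd s x).deriv
  -- (C) interior identity
  have hC : ∀ s ∈ Set.Ioo 0 T, ∀ x ∈ Set.Ioo a b, pt F s x = px Φ s x := by
    intro s hs x hx
    rw [hAderiv, hBderiv]
    have e1 := heq1 s hs x hx
    have e2 := heq2 s hs x hx
    have e3 := mixed_comm hu s x
    linear_combination pt u s x * e1 + e2 + px u s x * e3
  -- (D) extension to Icc by continuity
  have contPtF : Continuous (uncurry (pt F)) := (contDiff_pt hF).continuous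
  have contPxΦ : Continuous (uncurry (px Φ)) := (contDiff_px hΦ).continuous
  have hD : ∀ s ∈ Set.Ioo 0 T, ∀ x ∈ Set.Icc a b, pt F s x = px Φ s x := by
    intro s hs x hx
    have hcl : Set.Icc a b ⊆ closure (Set.Ioo a b) := by
      rw [closure_Ioo hab.ne]
    have hsub : closure (Set.Ioo a b) ⊆ {x : ℝ | pt F s x = px Φ s x} := by
      apply closure_minimal
      · intro y hy; exact hC s hs y hy
      · exact isClosed_eq (cont_x (contDiff_pt hF) s) (cont_x (contDiff_px hΦ) s)
    exact hsub (hcl hx)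
  -- (E) boundary vanishing
  have hE : ∀ s ∈ Set.Ioo 0 T, Φ s a = 0 ∧ Φ s b = 0 := by
    intro s hs
    have hmem : Set.Ioo 0 T ∈ nhds s := isOpen_Ioo.mem_nhds hs
    have hpta : pt u s a = 0 := by
      have hev : (fun r => u r a) =ᶠ[nhds s] fun _ => (0:ℝ) := by
        filter_upwards [hmem] with r hr
        exact (hbc r (Set.Ioo_subset_Icc_self hr)).1
      show deriv (fun r => u r a) s = 0
      rw [hev.deriv_eq, deriv_const]
    have hptb : pt u s b = 0 := by
      have hev : (fun r => u r b) =ᶠ[nhds s] fun _ => (0:ℝ) := by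
        filter_upwards [hmem] with r hr
        exact (hbc r (Set.Ioo_subset_Icc_self hr)).2.1
      show deriv (fun r => u r b) s = 0
      rw [hev.deriv_eq, deriv_const]
    have hba := (hbc s (Set.Ioo_subset_Icc_self hs)).2.2.1
    have hbb := (hbc s (Set.Ioo_subset_Icc_self hs)).2.2.2
    constructor
    · show pt u s a * px u s a + px θ s a + μ * (θ s a * pt u s a) = 0
      rw [hpta, hba]; ring
    · show pt u s b * px u s b + px θ s b + μ * (θ s b * pt u s b) = 0
      rw [hptb, hbb]; ring
  -- (F) for interior s, the space integral of pt F vanishes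
  have hFzero : ∀ s ∈ Set.Ioo 0 T, (∫ x in a..b, pt F s x) = 0 := by
    intro s hs
    have hcongr : (∫ x in a..b, pt F s x) = ∫ x in a..b, px Φ s x := by
      apply intervalIntegral.integral_congr
      intro x hx
      rw [Set.uIcc_of_le hab.le] at hx
      exact hD s hs x hx
    rw [hcongr]
    have hint : IntervalIntegrable (fun x => px Φ s x) volume a b :=
      (cont_x (contDiff_px hΦ) s).intervalIntegrable a b
    have := intervalIntegral.integral_eq_sub_of_hasDerivAt
      (f := fun y => Φ s y) (f' := fun x => px Φ s x)
      (fun x _ => hasDerivAt_x hΦ s x) hint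
    rw [this]
    show Φ s b - Φ s a = 0
    rw [(hE s hs).1, (hE s hs).2, sub_zero]
  -- (G) conclude
  -- continuity in the time variable
  have cont_t : ∀ {f : ℝ → ℝ → ℝ}, ContDiff ℝ (⊤ : ℕ∞) (uncurry f) → ∀ x : ℝ,
      Continuous (fun s => f s x) := fun hf x =>
    hf.continuous.comp (continuous_id.prodMk continuous_const)
  have hsplit : ∀ s : ℝ, (∫ x in a..b, F s x) =
      (1 / 2) * (∫ x in a..b, (pt u s x) ^ 2) + (1 / 2) * (∫ x in a..b, (px u s x) ^ 2) +
        ∫ x in a..b, θ s x := by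
    intro s
    have h1 : IntervalIntegrable (fun x => (1/2 : ℝ) * (pt u s x) ^ 2) volume a b :=
      (continuous_const.mul ((cont_x hptu s).pow 2)).intervalIntegrable a b
    have h2 : IntervalIntegrable (fun x => (1/2 : ℝ) * (px u s x) ^ 2) volume a b :=
      (continuous_const.mul ((cont_x hpxu s).pow 2)).intervalIntegrable a b
    have h3 : IntervalIntegrable (fun x => θ s x) volume a b :=
      (cont_x hθ s).intervalIntegrable a b
    have : (∫ x in a..b, F s x) =
        ∫ x in a..b, ((1/2 : ℝ) * (pt u s x) ^ 2 + (1/2 : ℝ) * (px u s x) ^ 2 + θ s x) := rfl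
    rw [this, intervalIntegral.integral_add (h1.add h2) h3, intervalIntegral.integral_add h1 h2,
      intervalIntegral.integral_const_mul, intervalIntegral.integral_const_mul]
  rw [← hsplit t, ← hsplit 0]
  rcases eq_or_lt_of_le ht.1 with h0 | h0
  · rw [← h0]
  · -- 0 < t ≤ T
    have hFt : ∀ x : ℝ, (∫ s in (0:ℝ)..t, pt F s x) = F t x - F 0 x := by
      intro x
      exact intervalIntegral.integral_eq_sub_of_hasDerivAt
        (fun s _ => hasDerivAt_t hF s x)
        ((cont_t (contDiff_pt hF) x).intervalIntegrable 0 t)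
    have hintFt : IntervalIntegrable (fun x => F t x) volume a b :=
      (cont_x hF t).intervalIntegrable a b
    have hintF0 : IntervalIntegrable (fun x => F 0 x) volume a b :=
      (cont_x hF 0).intervalIntegrable a b
    have hswapped : Continuous (uncurry fun x s => pt F s x) := by
      have : uncurry (fun x s => pt F s x) = uncurry (pt F) ∘ Prod.swap := rfl
      rw [this]
      exact contPtF.comp continuous_swap
    have hintprod : Integrable (uncurry fun x s => pt F s x)
        ((volume.restrict (Set.Ioc a b)).prod (volume.restrict (Set.Ioc 0 t))) := by
      rw [Measure.prod_restrict, ← Measure.volume_eq_prod]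
      exact (hswapped.continuousOn.integrableOn_compact
        (isCompact_Icc.prod isCompact_Icc)).mono_set
        (Set.prod_mono Set.Ioc_subset_Icc_self Set.Ioc_subset_Icc_self)
    have key : (∫ x in a..b, F t x) - (∫ x in a..b, F 0 x) = 0 := by
      calc (∫ x in a..b, F t x) - (∫ x in a..b, F 0 x)
          = ∫ x in a..b, (F t x - F 0 x) := (intervalIntegral.integral_sub hintFt hintF0).symm
        _ = ∫ x in a..b, ∫ s in (0:ℝ)..t, pt F s x :=
            (intervalIntegral.integral_congr (fun x _ => (hFt x).symm))
        _ = ∫ x in Set.Ioc a b, ∫ s in Set.Ioc (0:ℝ) t, pt F s x := by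
            simp only [intervalIntegral.integral_of_le hab.le,
              intervalIntegral.integral_of_le h0.le]
        _ = ∫ s in Set.Ioc (0:ℝ) t, ∫ x in Set.Ioc a b, pt F s x :=
            MeasureTheory.integral_integral_swap hintprod
        _ = ∫ s in Set.Ioo (0:ℝ) t, ∫ x in Set.Ioc a b, pt F s x :=
            MeasureTheory.integral_Ioc_eq_integral_Ioo
        _ = 0 := by
            apply MeasureTheory.setIntegral_eq_zero_of_forall_eq_zero
            intro s hs
            have hsT : s ∈ Set.Ioo 0 T := ⟨hs.1, lt_of_lt_of_le hs.2 ht.2⟩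
            rw [← intervalIntegral.integral_of_le hab.le]
            exact hFzero s hsT
    linarith
end

section
/- Let f ∈ H¹(a,b). Then there exist constants C₁, C₂ > 0 depending only on b - a such that ‖f‖_{L^∞(a,b)} ≤ C₁ ‖f'‖_{L²(a,b)}^{2/3} ‖f‖_{L¹(a,b)}^{1/3} + C₂ ‖f‖_{L¹(a,b)}. -/
/-!
On any subinterval `J ⊆ [a, b]` of length `ℓ` containing `x`, the mean value theorem for integrals
gives a point `y ∈ J` with `|f y| ≤ ‖f‖₁ / ℓ`, while the fundamental theorem of calculus and
Cauchy–Schwarz give `|f x - f y| ≤ √ℓ ‖f'‖₂`. Hence `|f x| ≤ ‖f‖₁ / ℓ + √ℓ ‖f'‖₂` for every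
`ℓ ∈ (0, b - a]`; choosing `ℓ = (‖f‖₁ / ‖f'‖₂) ^ (2/3)`, or `ℓ = b - a` when that is too large,
yields the inequality with `C₁ = 2` and `C₂ = 2 / (b - a)`.
-/

open MeasureTheory Set intervalIntegral Filter Topology

theorem integral_abs_le_sqrt_mul_sqrt_integral_sq {g : ℝ → ℝ} {c d : ℝ} (hcd : c ≤ d)
    (hg : AEStronglyMeasurable g (volume.restrict (Ioc c d)))
    (hg2 : IntervalIntegrable (fun t => g t ^ 2) volume c d) :
    ∫ t in c..d, |g t| ≤ √(d - c) * √(∫ t in c..d, g t ^ 2) := by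
  have hmem : MemLp (fun t => |g t|) (ENNReal.ofReal 2) (volume.restrict (Ioc c d)) := by
    rw [show ENNReal.ofReal 2 = 2 by norm_num]
    refine (memLp_two_iff_integrable_sq hg.norm).2 ?_
    simp only [Real.norm_eq_abs, sq_abs]
    exact hg2.1
  have := integral_mul_le_Lp_mul_Lq_of_nonneg Real.HolderConjugate.two_two
    (ae_of_all _ fun t => abs_nonneg (g t)) (ae_of_all _ fun _ => zero_le_one) hmem
    (memLp_const 1)
  simp only [mul_one, Real.rpow_two, sq_abs, MeasureTheory.integral_const,
    smul_eq_mul] at this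
  rw [integral_of_le hcd, integral_of_le hcd, mul_comm, Real.sqrt_eq_rpow, Real.sqrt_eq_rpow]
  simpa [Real.volume_real_Ioc_of_le hcd] using this

theorem sub_eq_integral_of_eq_add_integral {f f' : ℝ → ℝ} {a b x y : ℝ}
    (hf' : IntegrableOn f' (Icc a b))
    (hFTC : ∀ x ∈ Icc a b, f x = f a + ∫ t in a..x, f' t)
    (hx : x ∈ Icc a b) (hy : y ∈ Icc a b) :
    f x - f y = ∫ t in y..x, f' t := by
  have hint : ∀ z ∈ Icc a b, IntervalIntegrable f' volume a z := fun z hz =>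
    (hf'.mono_set (uIcc_of_le hz.1 ▸ Icc_subset_Icc_right hz.2)).intervalIntegrable
  rw [hFTC x hx, hFTC y hy, add_sub_add_left_eq_sub,
    integral_interval_sub_left (hint x hx) (hint y hy)]

theorem abs_sub_le_integral_abs_of_eq_add_integral {f f' : ℝ → ℝ} {a b c d x y : ℝ}
    (hf' : IntegrableOn f' (Icc a b))
    (hFTC : ∀ x ∈ Icc a b, f x = f a + ∫ t in a..x, f' t)
    (hcd : Icc c d ⊆ Icc a b) (hx : x ∈ Icc c d) (hy : y ∈ Icc c d) :
    |f x - f y| ≤ ∫ t in c..d, |f' t| := by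
  have hcd' : c ≤ d := hx.1.trans hx.2
  have hf'cd : IntervalIntegrable (fun t => |f' t|) volume c d :=
    ((intervalIntegrable_iff_integrableOn_Icc_of_le hcd').2 (hf'.mono_set hcd)).abs
  rw [sub_eq_integral_of_eq_add_integral hf' hFTC (hcd hx) (hcd hy)]
  calc |∫ t in y..x, f' t| ≤ |(∫ t in y..x, |f' t|)| :=
        norm_integral_le_abs_integral_norm (f := f')
    _ ≤ |(∫ t in c..d, |f' t|)| :=
        abs_integral_mono_interval (uIoc_subset_uIoc_of_uIcc_subset_uIcc
          (uIcc_subset_uIcc (uIcc_of_le hcd' ▸ hy) (uIcc_of_le hcd' ▸ hx)))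
          (ae_of_all _ fun t => abs_nonneg _) hf'cd
    _ = ∫ t in c..d, |f' t| := abs_of_nonneg (integral_nonneg hcd' fun t _ => abs_nonneg _)

theorem exists_Icc_add_subset_Icc_mem {a b x ℓ : ℝ} (hx : x ∈ Icc a b) (hℓ : 0 ≤ ℓ)
    (hℓb : ℓ ≤ b - a) : ∃ c, Icc c (c + ℓ) ⊆ Icc a b ∧ x ∈ Icc c (c + ℓ) := by
  refine ⟨min x (b - ℓ), Icc_subset_Icc (le_min hx.1 (by linarith)) ?_, min_le_left _ _, ?_⟩
  · linarith [min_le_right x (b - ℓ)]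
  · rcases le_total x (b - ℓ) with h | h
    · rw [min_eq_left h]; linarith
    · rw [min_eq_right h]; linarith [hx.2]

theorem abs_le_integral_abs_div_add_sqrt_mul_sqrt_integral_sq {f f' : ℝ → ℝ} {a b x ℓ : ℝ}
    (hf : ContinuousOn f (Icc a b)) (hf' : IntegrableOn f' (Icc a b))
    (hf'2 : IntegrableOn (fun t => f' t ^ 2) (Icc a b))
    (hFTC : ∀ x ∈ Icc a b, f x = f a + ∫ t in a..x, f' t)
    (hx : x ∈ Icc a b) (hℓ : 0 < ℓ) (hℓb : ℓ ≤ b - a) :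
    |f x| ≤ (∫ t in a..b, |f t|) / ℓ + √ℓ * √(∫ t in a..b, f' t ^ 2) := by
  obtain ⟨c, hsub, hxc⟩ := exists_Icc_add_subset_Icc_mem hx hℓ.le hℓb
  have hac : a ≤ c := (hsub (left_mem_Icc.2 (by linarith))).1
  have hcb : c + ℓ ≤ b := (hsub (right_mem_Icc.2 (by linarith))).2
  have hab : a ≤ b := by linarith
  obtain ⟨y, hy, hy_avg⟩ := exists_eq_interval_average (f := fun t => |f t|)
    (by linarith : c ≠ c + ℓ) (uIcc_of_le (by linarith : c ≤ c + ℓ) ▸ (hf.mono hsub).abs)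
  rw [interval_average_eq_div, add_sub_cancel_left] at hy_avg
  have hy' : y ∈ Icc c (c + ℓ) :=
    Ioo_subset_Icc_self (uIoo_of_le (le_add_of_nonneg_right hℓ.le) ▸ hy)
  have h_avg : ∫ t in c..c + ℓ, |f t| ≤ ∫ t in a..b, |f t| :=
    integral_mono_interval hac (by linarith) hcb (ae_of_all _ fun t => abs_nonneg _)
      ((intervalIntegrable_iff_integrableOn_Icc_of_le hab).2 hf.abs.integrableOn_Icc)
  have h_osc := abs_sub_le_integral_abs_of_eq_add_integral hf' hFTC hsub hxc hy'
  have h_cs := integral_abs_le_sqrt_mul_sqrt_integral_sq (g := f') (by linarith : c ≤ c + ℓ)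
    ((hf'.mono_set (Ioc_subset_Icc_self.trans hsub)).aestronglyMeasurable)
    ((intervalIntegrable_iff_integrableOn_Icc_of_le (by linarith)).2 (hf'2.mono_set hsub))
  have h_sq : ∫ t in c..c + ℓ, f' t ^ 2 ≤ ∫ t in a..b, f' t ^ 2 :=
    integral_mono_interval hac (by linarith) hcb (ae_of_all _ fun t => sq_nonneg _)
      ((intervalIntegrable_iff_integrableOn_Icc_of_le hab).2 hf'2)
  rw [add_sub_cancel_left] at h_cs
  calc |f x| ≤ |f y| + |f x - f y| := by linarith [abs_sub_abs_le_abs_sub (f x) (f y)]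
    _ ≤ (∫ t in a..b, |f t|) / ℓ + √ℓ * √(∫ t in c..c + ℓ, f' t ^ 2) := by
      rw [hy_avg]
      gcongr
      exact h_osc.trans h_cs
    _ ≤ (∫ t in a..b, |f t|) / ℓ + √ℓ * √(∫ t in a..b, f' t ^ 2) := by gcongr

theorem le_of_forall_le_cube_div_add_sqrt_mul_cube {t β σ L : ℝ} (hβ : 0 ≤ β) (hσ : 0 ≤ σ)
    (hL : 0 < L) (h : ∀ ℓ, 0 < ℓ → ℓ ≤ L → t ≤ β ^ 3 / ℓ + √ℓ * σ ^ 3) :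
    t ≤ 2 * σ ^ 2 * β + 2 / L * β ^ 3 := by
  rcases hβ.eq_or_lt with rfl | hβ
  · have h_lim : Tendsto (fun ℓ => √ℓ * σ ^ 3) (𝓝[>] 0) (𝓝 0) := by
      simpa using ((Real.continuous_sqrt.tendsto 0).mono_left nhdsWithin_le_nhds).mul_const
        (σ ^ 3)
    have : t ≤ 0 := ge_of_tendsto h_lim <| by
      filter_upwards [Ioc_mem_nhdsGT hL] with ℓ hℓ
      simpa using h ℓ hℓ.1 hℓ.2
    simpa using this
  rcases le_or_gt (β ^ 2) (L * σ ^ 2) with h_small | h_large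
  · -- the optimal length `(β / σ) ^ 2` balances the two terms
    have hσ : 0 < σ := hσ.lt_of_ne (by rintro rfl; nlinarith)
    have := h ((β / σ) ^ 2) (by positivity)
      (by rw [div_pow, div_le_iff₀ (by positivity)]; linarith)
    rw [Real.sqrt_sq (by positivity)] at this
    have heq : β ^ 3 / (β / σ) ^ 2 + β / σ * σ ^ 3 = 2 * σ ^ 2 * β := by
      field_simp
      ring
    nlinarith [pow_pos hβ 3, div_pos two_pos hL]
  · have hσL : √L * σ < β := by
      refine lt_of_pow_lt_pow_left₀ 2 hβ.le ?_
      rwa [mul_pow, Real.sq_sqrt hL.le]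
    have hsqrt : √L * σ ^ 3 ≤ β ^ 3 / L := by
      rw [le_div_iff₀ hL]
      have := pow_le_pow_left₀ (by positivity) hσL.le 3
      calc √L * σ ^ 3 * L = (√L * σ) ^ 3 := by
            rw [mul_pow, show √L ^ 3 = √L ^ 2 * √L by ring, Real.sq_sqrt hL.le]; ring
        _ ≤ β ^ 3 := this
    have := h L hL le_rfl
    have : 2 / L * β ^ 3 = β ^ 3 / L + β ^ 3 / L := by ring
    nlinarith [sq_nonneg σ]

theorem le_of_forall_le_div_add_sqrt_mul {t B S L : ℝ} (hB : 0 ≤ B) (hS : 0 ≤ S) (hL : 0 < L)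
    (h : ∀ ℓ, 0 < ℓ → ℓ ≤ L → t ≤ B / ℓ + √ℓ * S) :
    t ≤ 2 * S ^ ((2 : ℝ) / 3) * B ^ ((1 : ℝ) / 3) + 2 / L * B := by
  have cube_rpow : ∀ {X : ℝ}, 0 ≤ X → (X ^ ((1 : ℝ) / 3)) ^ 3 = X := fun hX => by
    rw [one_div]; exact Real.rpow_inv_natCast_pow hX three_ne_zero
  have hS23 : S ^ ((2 : ℝ) / 3) = (S ^ ((1 : ℝ) / 3)) ^ 2 := by
    rw [← Real.rpow_natCast, ← Real.rpow_mul hS]; norm_num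
  have := le_of_forall_le_cube_div_add_sqrt_mul_cube (t := t) (β := B ^ ((1 : ℝ) / 3))
    (σ := S ^ ((1 : ℝ) / 3)) (by positivity) (by positivity) hL
    (by simpa only [cube_rpow hB, cube_rpow hS] using h)
  rwa [cube_rpow hB, ← hS23] at this

theorem stmt_11 (a b : ℝ) (hab : a < b) :
    ∃ C₁ > (0 : ℝ), ∃ C₂ > (0 : ℝ), ∀ f f' : ℝ → ℝ,
      ContinuousOn f (Set.Icc a b) →
      IntegrableOn f' (Set.Icc a b) →
      IntegrableOn (fun x => (f' x) ^ 2) (Set.Icc a b) →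
      (∀ x ∈ Set.Icc a b, f x = f a + ∫ t in a..x, f' t) →
      ∀ x ∈ Set.Icc a b,
        |f x| ≤ C₁ * ((∫ y in a..b, (f' y) ^ 2) ^ ((1 : ℝ) / 2)) ^ ((2 : ℝ) / 3) *
            (∫ y in a..b, |f y|) ^ ((1 : ℝ) / 3) +
          C₂ * ∫ y in a..b, |f y| := by
  refine ⟨2, two_pos, 2 / (b - a), div_pos two_pos (sub_pos.2 hab), ?_⟩
  intro f f' hf hf' hf'2 hFTC x hx
  rw [← Real.sqrt_eq_rpow]
  exact le_of_forall_le_div_add_sqrt_mul (integral_nonneg hab.le fun _ _ => abs_nonneg _)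
    (Real.sqrt_nonneg _) (sub_pos.2 hab) fun ℓ hℓ hℓb =>
      abs_le_integral_abs_div_add_sqrt_mul_sqrt_integral_sq hf hf' hf'2 hFTC hx hℓ hℓb
end
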